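/- Let X ⊆ ℝ^d be a finite set, C ⊆ ℝ^d a finite nonempty set with cost(X,C) > 0, and P ⊆ X a nonempty subset. Define H̃(P,C) := cost(P,C) if P ∩ C ≠ ∅ and H̃(P,C) := 5·OPT_1(P) otherwise. If a random point c ∈ X is chosen with probability Pr(c = x) = cost(x,C)/cost(X,C), then Σ_{x∈X} (cost(x,C)/cost(X,C)) · H̃(P, C ∪ {x}) ≤ H̃(P,C). -/

import Mathlib

open Finset
open scoped Classical

/-- `ptCost x C` is `cost(x, C) = min_{c ∈ C} ‖x - c‖²`. -/
noncomputable def ptCost {d : ℕ} (x : EuclideanSpace ℝ (Fin d))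
    (C : Finset (EuclideanSpace ℝ (Fin d))) : ℝ :=
  sInf ((fun c => ‖x - c‖ ^ 2) '' (C : Set (EuclideanSpace ℝ (Fin d))))

/-- `setCost Y C` is `cost(Y, C) = Σ_{x ∈ Y} cost(x, C)`. -/
noncomputable def setCost {d : ℕ} (Y C : Finset (EuclideanSpace ℝ (Fin d))) : ℝ :=
  ∑ x ∈ Y, ptCost x C

/-- The centroid `μ = (Σ_{y ∈ Y} y) / |Y|` of a finite set. -/
noncomputable def centroid {d : ℕ} (Y : Finset (EuclideanSpace ℝ (Fin d))) :
    EuclideanSpace ℝ (Fin d) :=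
  (Y.card : ℝ)⁻¹ • ∑ y ∈ Y, y

/-- `opt1 Y = OPT₁(Y) = Σ_{y ∈ Y} ‖y - μ‖²`. -/
noncomputable def opt1 {d : ℕ} (Y : Finset (EuclideanSpace ℝ (Fin d))) : ℝ :=
  ∑ y ∈ Y, ‖y - centroid Y‖ ^ 2

/-- `H̃(P, C)`: the cost `cost(P, C)` if `P` is covered by `C`, and `5·OPT₁(P)` otherwise. -/
noncomputable def hTilde {d : ℕ} (P C : Finset (EuclideanSpace ℝ (Fin d))) : ℝ :=
  if (P ∩ C).Nonempty then setCost P C else 5 * opt1 P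

/-!
If `C` already meets `P`, adding a centre can only lower `cost(P, ·)`. Otherwise only samples
`x ∈ P` change `H̃`; write `a y = cost(y, C)` and `t = ‖x - y‖`. After sampling `x`, the point `y`
costs at most `min (a y) t²`, so after symmetrising it suffices to bound
`a x · min (a y) t² + a y · min (a x) t²` for each pair. As `√a` is `1`-Lipschitz, this is at most
`5 · min (a x) (a y) · t²`. Expanding `‖x - y‖²` around the centroid `μ`, the cross term
`Σ min (a x) (a y) ⟪x - μ, y - μ⟫` is nonnegative because the kernel `min` is positive
semidefinite, which leaves `Σ Σ min (a x) (a y) ‖x - y‖² ≤ 2 · OPT₁(P) · Σ a`.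
-/

open Finset Metric
open scoped RealInnerProductSpace

section MinKernel

variable {ι E : Type*} [NormedAddCommGroup E] [InnerProductSpace ℝ E]

lemma sum_sum_inner_nonneg (s : Finset ι) (v : ι → E) :
    0 ≤ ∑ i ∈ s, ∑ j ∈ s, ⟪v i, v j⟫ := by
  have h : ⟪∑ i ∈ s, v i, ∑ j ∈ s, v j⟫ = ∑ i ∈ s, ∑ j ∈ s, ⟪v i, v j⟫ := by
    rw [sum_inner]
    simp only [inner_sum]
  exact h ▸ real_inner_self_nonneg

lemma sum_sum_min_mul_inner_nonneg (s : Finset ι) {a : ι → ℝ}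
    (ha : ∀ i ∈ s, 0 ≤ a i) (v : ι → E) :
    0 ≤ ∑ i ∈ s, ∑ j ∈ s, min (a i) (a j) * ⟪v i, v j⟫ := by
  suffices key : ∀ c, (∀ i ∈ s, c ≤ a i) →
      0 ≤ ∑ i ∈ s, ∑ j ∈ s, (min (a i) (a j) - c) * ⟪v i, v j⟫ by
    simpa using key 0 ha
  classical
  clear ha
  induction s using Finset.induction_on_min_value a with
  | empty => simp
  | insert i₀ s hi₀ hmin ih =>
    intro c hc
    -- Peeling off the level `a i₀` kills every term involving `i₀`.
    have hpeel : ∑ i ∈ insert i₀ s, ∑ j ∈ insert i₀ s, (min (a i) (a j) - c) * ⟪v i, v j⟫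
        = (a i₀ - c) * ∑ i ∈ insert i₀ s, ∑ j ∈ insert i₀ s, ⟪v i, v j⟫
          + ∑ i ∈ s, ∑ j ∈ s, (min (a i) (a j) - a i₀) * ⟪v i, v j⟫ := by
      have hmin' : ∀ j ∈ insert i₀ s, a i₀ ≤ a j := fun j hj =>
        (mem_insert.1 hj).elim (fun h => h ▸ le_rfl) (hmin j)
      calc _ = ∑ i ∈ insert i₀ s, ∑ j ∈ insert i₀ s,
              ((a i₀ - c) * ⟪v i, v j⟫ + (min (a i) (a j) - a i₀) * ⟪v i, v j⟫) :=
            sum_congr rfl fun i _ => sum_congr rfl fun j _ => by ring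
        _ = (a i₀ - c) * ∑ i ∈ insert i₀ s, ∑ j ∈ insert i₀ s, ⟪v i, v j⟫
              + ∑ i ∈ insert i₀ s, ∑ j ∈ insert i₀ s, (min (a i) (a j) - a i₀) * ⟪v i, v j⟫ := by
            simp only [sum_add_distrib, mul_sum]
        _ = _ := by
          congr 1
          rw [sum_insert hi₀, sum_eq_zero fun j hj => by rw [min_eq_left (hmin' j hj), sub_self,
            zero_mul], zero_add]
          refine sum_congr rfl fun i hi => ?_
          rw [sum_insert hi₀, min_eq_right (hmin i hi), sub_self, zero_mul, zero_add]
    rw [hpeel]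
    have := sum_sum_inner_nonneg (insert i₀ s) v
    have := ih (a i₀) hmin
    have := hc i₀ (mem_insert_self i₀ s)
    nlinarith

lemma sum_sum_min_mul_norm_sub_sq_le (s : Finset E) {w : E → ℝ} (hw : ∀ x ∈ s, 0 ≤ w x)
    (m : E) :
    ∑ x ∈ s, ∑ y ∈ s, min (w x) (w y) * ‖x - y‖ ^ 2
      ≤ 2 * (∑ y ∈ s, ‖y - m‖ ^ 2) * ∑ x ∈ s, w x := by
  have hterm : ∀ x y, min (w x) (w y) * ‖x - y‖ ^ 2
      ≤ w y * ‖x - m‖ ^ 2 + w x * ‖y - m‖ ^ 2 - 2 * (min (w x) (w y) * ⟪x - m, y - m⟫) := by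
    intro x y
    have hsplit : ‖x - y‖ ^ 2 = ‖x - m‖ ^ 2 - 2 * ⟪x - m, y - m⟫ + ‖y - m‖ ^ 2 := by
      rw [← norm_sub_sq_real, sub_sub_sub_cancel_right]
    have h₁ := mul_le_mul_of_nonneg_right (min_le_right (w x) (w y)) (sq_nonneg ‖x - m‖)
    have h₂ := mul_le_mul_of_nonneg_right (min_le_left (w x) (w y)) (sq_nonneg ‖y - m‖)
    rw [hsplit]
    linarith
  calc ∑ x ∈ s, ∑ y ∈ s, min (w x) (w y) * ‖x - y‖ ^ 2
      ≤ ∑ x ∈ s, ∑ y ∈ s,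
          (w y * ‖x - m‖ ^ 2 + w x * ‖y - m‖ ^ 2 - 2 * (min (w x) (w y) * ⟪x - m, y - m⟫)) :=
        sum_le_sum fun x _ => sum_le_sum fun y _ => hterm x y
    _ = 2 * (∑ y ∈ s, ‖y - m‖ ^ 2) * ∑ x ∈ s, w x
          - 2 * ∑ x ∈ s, ∑ y ∈ s, min (w x) (w y) * ⟪x - m, y - m⟫ := by
        simp only [sum_add_distrib, sum_sub_distrib, ← mul_sum, ← sum_mul]
        ring
    _ ≤ 2 * (∑ y ∈ s, ‖y - m‖ ^ 2) * ∑ x ∈ s, w x := by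
        linarith [sum_sum_min_mul_inner_nonneg s hw (· - m)]

end MinKernel

lemma sq_mul_min_add_sq_mul_min_le {α β t : ℝ} (hα : 0 ≤ α) (hβ : 0 ≤ β) (ht : 0 ≤ t)
    (hαβ : α ≤ β + t) (hβα : β ≤ α + t) :
    α ^ 2 * min (β ^ 2) (t ^ 2) + β ^ 2 * min (α ^ 2) (t ^ 2)
      ≤ 5 * (min (α ^ 2) (β ^ 2) * t ^ 2) := by
  wlog h : α ≤ β generalizing α β
  · rw [add_comm, min_comm (α ^ 2) (β ^ 2)]
    exact this hβ hα hβα hαβ (le_of_not_ge h)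
  rw [min_eq_left (pow_le_pow_left₀ hα h 2)]
  have h₁ : α ^ 2 * min (β ^ 2) (t ^ 2) ≤ α ^ 2 * t ^ 2 :=
    mul_le_mul_of_nonneg_left (min_le_right _ _) (sq_nonneg α)
  -- `β ≤ α + t ≤ 2 max α t`, so `β² min (α², t²) ≤ 4 max² min² = 4 α² t²`.
  have h₂ : β ^ 2 * min (α ^ 2) (t ^ 2) ≤ 4 * (α ^ 2 * t ^ 2) := by
    rcases le_total α t with hαt | htα
    · rw [min_eq_left (pow_le_pow_left₀ hα hαt 2)]
      have hβt : β ^ 2 ≤ (2 * t) ^ 2 := pow_le_pow_left₀ hβ (by linarith) 2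
      nlinarith [mul_le_mul_of_nonneg_left hβt (sq_nonneg α)]
    · rw [min_eq_right (pow_le_pow_left₀ ht htα 2)]
      have hβα' : β ^ 2 ≤ (2 * α) ^ 2 := pow_le_pow_left₀ hβ (by linarith) 2
      nlinarith [mul_le_mul_of_nonneg_left hβα' (sq_nonneg t)]
  linarith

section Cost

variable {d : ℕ} {C : Finset (EuclideanSpace ℝ (Fin d))}

lemma ptCost_nonneg (x : EuclideanSpace ℝ (Fin d)) (C : Finset (EuclideanSpace ℝ (Fin d))) :
    0 ≤ ptCost x C :=
  Real.sInf_nonneg <| by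
    rintro _ ⟨c, -, rfl⟩
    positivity

lemma ptCost_eq_infDist_sq (hC : C.Nonempty) (x : EuclideanSpace ℝ (Fin d)) :
    ptCost x C = infDist x (C : Set (EuclideanSpace ℝ (Fin d))) ^ 2 := by
  obtain ⟨c, hc, hxc⟩ := C.finite_toSet.isCompact.exists_infDist_eq_dist hC x
  refine le_antisymm (csInf_le ⟨0, ?_⟩ ⟨c, hc, by rw [hxc, dist_eq_norm]⟩)
    (le_csInf ((coe_nonempty.2 hC).image _) ?_)
  · rintro _ ⟨c', -, rfl⟩
    positivity
  · rintro _ ⟨c', hc', rfl⟩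
    dsimp only
    rw [← dist_eq_norm]
    exact pow_le_pow_left₀ infDist_nonneg (infDist_le_dist_of_mem hc') 2

lemma ptCost_insert_le (hC : C.Nonempty) (x y : EuclideanSpace ℝ (Fin d)) :
    ptCost y (insert x C) ≤ min (ptCost y C) (‖x - y‖ ^ 2) := by
  rw [ptCost_eq_infDist_sq hC, ptCost_eq_infDist_sq (insert_nonempty x C), norm_sub_rev,
    ← dist_eq_norm, coe_insert]
  refine le_min (pow_le_pow_left₀ infDist_nonneg ?_ 2) (pow_le_pow_left₀ infDist_nonneg ?_ 2)
  · exact infDist_le_infDist_of_subset (Set.subset_insert x _) (coe_nonempty.2 hC)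
  · exact infDist_le_dist_of_mem (Set.mem_insert x _)

lemma setCost_insert_le (hC : C.Nonempty) (P : Finset (EuclideanSpace ℝ (Fin d)))
    (x : EuclideanSpace ℝ (Fin d)) :
    setCost P (insert x C) ≤ setCost P C :=
  sum_le_sum fun y _ => (ptCost_insert_le hC x y).trans (min_le_left _ _)

lemma ptCost_mul_min_add_le (hC : C.Nonempty) (x y : EuclideanSpace ℝ (Fin d)) :
    ptCost x C * min (ptCost y C) (‖x - y‖ ^ 2) + ptCost y C * min (ptCost x C) (‖x - y‖ ^ 2)
      ≤ 5 * (min (ptCost x C) (ptCost y C) * ‖x - y‖ ^ 2) := by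
  rw [ptCost_eq_infDist_sq hC, ptCost_eq_infDist_sq hC, ← dist_eq_norm]
  refine sq_mul_min_add_sq_mul_min_le infDist_nonneg infDist_nonneg dist_nonneg
    infDist_le_infDist_add_dist ?_
  rw [dist_comm]
  exact infDist_le_infDist_add_dist

lemma sum_ptCost_mul_setCost_insert_le (hC : C.Nonempty) (P : Finset (EuclideanSpace ℝ (Fin d))) :
    ∑ x ∈ P, ptCost x C * setCost P (insert x C) ≤ 5 * opt1 P * ∑ x ∈ P, ptCost x C := by
  have hS : ∑ x ∈ P, ptCost x C * setCost P (insert x C)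
      ≤ ∑ x ∈ P, ∑ y ∈ P, ptCost x C * min (ptCost y C) (‖x - y‖ ^ 2) := by
    refine sum_le_sum fun x _ => ?_
    rw [← mul_sum]
    exact mul_le_mul_of_nonneg_left (sum_le_sum fun y _ => ptCost_insert_le hC x y)
      (ptCost_nonneg x C)
  have hswap : ∑ x ∈ P, ∑ y ∈ P, ptCost x C * min (ptCost y C) (‖x - y‖ ^ 2)
      = ∑ x ∈ P, ∑ y ∈ P, ptCost y C * min (ptCost x C) (‖x - y‖ ^ 2) :=
    sum_comm.trans (sum_congr rfl fun _ _ => sum_congr rfl fun _ _ => by rw [norm_sub_rev])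
  have hpair : 2 * ∑ x ∈ P, ∑ y ∈ P, ptCost x C * min (ptCost y C) (‖x - y‖ ^ 2) ≤ 5 * ∑ x ∈ P, ∑ y ∈ P, min (ptCost x C) (ptCost y C) * ‖x - y‖ ^ 2 := by
    rw [two_mul]
    nth_rewrite 2 [hswap]
    rw [mul_sum, ← sum_add_distrib]
    refine sum_le_sum fun x _ => ?_
    rw [mul_sum, ← sum_add_distrib]
    exact sum_le_sum fun y _ => ptCost_mul_min_add_le hC x y
  have hkernel := sum_sum_min_mul_norm_sub_sq_le P (fun x _ => ptCost_nonneg x C) (centroid P)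
  rw [← opt1] at hkernel
  nlinarith

end Cost

section HTilde

variable {d : ℕ} {X C P : Finset (EuclideanSpace ℝ (Fin d))} {x : EuclideanSpace ℝ (Fin d)}

lemma hTilde_insert_of_mem (hx : x ∈ P) : hTilde P (insert x C) = setCost P (insert x C) :=
  if_pos ⟨x, mem_inter.2 ⟨hx, mem_insert_self x C⟩⟩

lemma hTilde_insert_of_covered (h : (P ∩ C).Nonempty) :
    hTilde P (insert x C) = setCost P (insert x C) :=
  if_pos (h.mono (inter_subset_inter_left (subset_insert x C)))

lemma hTilde_insert_of_not_mem_of_uncovered (hx : x ∉ P) (h : ¬(P ∩ C).Nonempty) :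
    hTilde P (insert x C) = hTilde P C := by
  rw [hTilde, hTilde, if_neg h, if_neg]
  rintro ⟨y, hy⟩
  obtain ⟨hyP, hyC⟩ := mem_inter.1 hy
  rcases mem_insert.1 hyC with rfl | hyC
  · exact hx hyP
  · exact h ⟨y, mem_inter.2 ⟨hyP, hyC⟩⟩

lemma sum_ptCost_mul_hTilde_insert_le (hC : C.Nonempty) (hPX : P ⊆ X) :
    ∑ x ∈ X, ptCost x C * hTilde P (insert x C) ≤ hTilde P C * setCost X C := by
  by_cases hcov : (P ∩ C).Nonempty
  · rw [setCost, mul_sum]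
    refine sum_le_sum fun x _ => ?_
    rw [hTilde_insert_of_covered hcov, hTilde, if_pos hcov, mul_comm (setCost P C)]
    exact mul_le_mul_of_nonneg_left (setCost_insert_le hC P x) (ptCost_nonneg x C)
  · have houtside : ∑ x ∈ X \ P, ptCost x C * hTilde P (insert x C)
        = hTilde P C * ∑ x ∈ X \ P, ptCost x C := by
      rw [mul_sum]
      refine sum_congr rfl fun x hx => ?_
      rw [hTilde_insert_of_not_mem_of_uncovered (mem_sdiff.1 hx).2 hcov, mul_comm]
    have hinside : ∑ x ∈ P, ptCost x C * hTilde P (insert x C)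
        = ∑ x ∈ P, ptCost x C * setCost P (insert x C) :=
      sum_congr rfl fun x hx => by rw [hTilde_insert_of_mem hx]
    have hbound := sum_ptCost_mul_setCost_insert_le hC P
    rw [← sum_sdiff hPX, houtside, hinside, setCost, ← sum_sdiff hPX, hTilde, if_neg hcov]
    nlinarith

end HTilde

theorem hTilde_supermartingale_general {d : ℕ}
    (X C P : Finset (EuclideanSpace ℝ (Fin d)))
    (hC : C.Nonempty) (hcost : 0 < setCost X C) (hPX : P ⊆ X) :
    ∑ x ∈ X, (ptCost x C / setCost X C) * hTilde P (insert x C) ≤ hTilde P C := by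
  simp only [div_mul_eq_mul_div, ← sum_div]
  rw [div_le_iff₀ hcost]
  exact sum_ptCost_mul_hTilde_insert_le hC hPX

/-- One step of `D²`-sampling does not increase `H̃` in expectation:
`Σ_{x∈X} (cost(x,C)/cost(X,C)) · H̃(P, C ∪ {x}) ≤ H̃(P, C)`. -/
theorem hTilde_supermartingale {d : ℕ}
    (X C P : Finset (EuclideanSpace ℝ (Fin d)))
    (hC : C.Nonempty) (hcost : 0 < setCost X C) (hPX : P ⊆ X) (hPne : P.Nonempty) :
    ∑ x ∈ X, (ptCost x C / setCost X C) * hTilde P (insert x C) ≤ hTilde P C :=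
  hTilde_supermartingale_general X C P hC hcost hPX
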